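/- arXiv:2412.09750 — 3 statements merged into one kernel-verified Lean document; each statement's English description precedes it below -/
import Mathlib

section
/- No Fibonacci number can be written in base 10 using only the digit 6; that is, no Fibonacci number equals 6·(10^k − 1)/9 for any k ≥ 1. -/
private lemma rep_succ (k : ℕ) :
    6 * ((10 ^ (k + 1) - 1) / 9) = 10 * (6 * ((10 ^ k - 1) / 9)) + 6 := by
  have h : (9 : ℕ) ∣ 10 ^ k - 1 := by
    have : (10 : ℕ) ^ k % 9 = 1 % 9 := by
      have : (10 : ℕ) % 9 = 1 % 9 := rfl
      simpa using Nat.pow_mod 10 k 9 ▸ (by simp [Nat.pow_mod])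
    omega
  obtain ⟨c, hc⟩ := h
  have h1 : (1 : ℕ) ≤ 10 ^ k := Nat.one_le_pow _ _ (by norm_num)
  have h2 : 10 ^ (k + 1) = 10 * 10 ^ k := by ring
  have h3 : 10 ^ (k + 1) - 1 = 9 * (10 * c + 1) := by omega
  rw [h3, hc, Nat.mul_div_cancel_left _ (by norm_num : 0 < 9),
    Nat.mul_div_cancel_left _ (by norm_num : 0 < 9)]
  ring

private lemma rep_mod (k : ℕ) (hk : 1 ≤ k) :
    6 * ((10 ^ k - 1) / 9) % 72 = 6 ∨ 6 * ((10 ^ k - 1) / 9) % 72 = 66 ∨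
    6 * ((10 ^ k - 1) / 9) % 72 = 18 ∨ 6 * ((10 ^ k - 1) / 9) % 72 = 42 := by
  induction k with
  | zero => omega
  | succ m ih =>
    rcases Nat.eq_or_lt_of_le hk with h | h
    · left; norm_num [← h]
    · have hm : 1 ≤ m := by omega
      have := ih hm
      rw [rep_succ, Nat.add_mod, Nat.mul_mod]
      rcases this with h | h | h | h <;> rw [h] <;> norm_num

private lemma fib_period (n : ℕ) :
    Nat.fib (n + 24) % 72 = Nat.fib n % 72 ∧
    Nat.fib (n + 25) % 72 = Nat.fib (n + 1) % 72 := by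
  induction n with
  | zero => constructor <;> decide
  | succ m ih =>
    refine ⟨ih.2, ?_⟩
    have e1 : Nat.fib (m + 1 + 25) = Nat.fib (m + 24) + Nat.fib (m + 25) := by
      rw [show m + 1 + 25 = (m + 24) + 2 by ring, Nat.fib_add_two]
    have e2 : Nat.fib (m + 1 + 1) = Nat.fib m + Nat.fib (m + 1) := by
      rw [show m + 1 + 1 = m + 2 by ring, Nat.fib_add_two]
    have := ih.1; have := ih.2
    omega

private lemma fib_mod_reduce (n : ℕ) : Nat.fib n % 72 = Nat.fib (n % 24) % 72 := by
  induction n using Nat.strong_induction_on with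
  | _ n ih =>
    by_cases h : n < 24
    · rw [Nat.mod_eq_of_lt h]
    · push_neg at h
      obtain ⟨m, rfl⟩ : ∃ m, n = m + 24 := ⟨n - 24, by omega⟩
      rw [(fib_period m).1, ih m (by omega), Nat.add_mod_right]

theorem fib_not_repdigit_six (n k : ℕ) (hk : 1 ≤ k) :
    Nat.fib n ≠ 6 * ((10 ^ k - 1) / 9) := by
  intro heq
  have h1 := fib_mod_reduce n
  have h2 := rep_mod k hk
  rw [heq] at h1
  have hlt : n % 24 < 24 := Nat.mod_lt _ (by norm_num)
  interval_cases h : n % 24 <;> norm_num [Nat.fib] at h1 <;> omega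
end

section
/- The only Fibonacci numbers all of whose base-10 digits are equal (repdigits) with more than one digit is 55; that is, if F_n is a repdigit with at least two digits, then F_n = 55. -/
set_option maxRecDepth 100000

/-- repunit: `rep k` is the number consisting of `k` ones. -/
def rep : ℕ → ℕ
  | 0 => 0
  | k + 1 => 10 * rep k + 1

lemma rep_nine : ∀ k, 9 * rep k + 1 = 10 ^ k := by
  intro k
  induction k with
  | zero => simp [rep]
  | succ k ih => rw [rep, pow_succ]; omega

lemma rep_eq (k : ℕ) : (10 ^ k - 1) / 9 = rep k := by
  have h := rep_nine k
  omega

lemma rep_add3 : ∀ m, rep (m + 3) = 1000 * rep m + 111 := by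
  intro m
  induction m with
  | zero => rfl
  | succ m ih => show rep (m + 3 + 1) = _; rw [rep, ih, rep]; ring

lemma rep_add4 : ∀ m, rep (m + 4) = 10000 * rep m + 1111 := by
  intro m
  induction m with
  | zero => rfl
  | succ m ih => show rep (m + 4 + 1) = _; rw [rep, ih, rep]; ring

lemma rep_mod101 : ∀ q j, rep (j + 4 * q) % 101 = rep j % 101 := by
  intro q
  induction q with
  | zero => intro j; rfl
  | succ q ih =>
    intro j
    have : j + 4 * (q + 1) = (j + 4 * q) + 4 := by ring
    rw [this, rep_add4, ← ih j]
    omega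

/-- One step of the Fibonacci pair recursion mod 101000. -/
def fstep (p : ℕ × ℕ) : ℕ × ℕ := (p.2, (p.1 + p.2) % 101000)

/-- Fibonacci pair mod 101000. -/
def fm : ℕ → ℕ × ℕ
  | 0 => (0, 1)
  | n + 1 => fstep (fm n)

lemma fm_eq : ∀ n, fm n = (Nat.fib n % 101000, Nat.fib (n + 1) % 101000) := by
  intro n
  induction n with
  | zero => rfl
  | succ n ih =>
    rw [fm, ih]
    simp only [fstep]
    refine Prod.ext rfl ?_
    show (Nat.fib n % 101000 + Nat.fib (n + 1) % 101000) % 101000 = Nat.fib (n + 1 + 1) % 101000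
    rw [Nat.fib_add_two (n := n)]
    omega

/-- The property each residue must satisfy. -/
def good (a : ℕ) : Bool :=
  (List.range 10).all fun d => (List.range 4).all fun j =>
    !(decide (1 ≤ d) && decide (a % 1000 = 111 * d) && decide (a % 101 = (d * rep j) % 101))

lemma good_spec (a : ℕ) (hg : good a = true) :
    ∀ d, d < 10 → ∀ j, j < 4 →
      ¬(1 ≤ d ∧ a % 1000 = 111 * d ∧ a % 101 = (d * rep j) % 101) := by
  intro d hd j hj hcon
  have h1 := (List.all_eq_true.mp hg) d (List.mem_range.mpr hd)
  have h2 := (List.all_eq_true.mp h1) j (List.mem_range.mpr hj)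
  simp only [Bool.not_eq_true', Bool.and_eq_false_iff, decide_eq_false_iff_not] at h2
  rcases h2 with (h | h) | h
  · exact h hcon.1
  · exact h hcon.2.1
  · exact h hcon.2.2

/-- Linear scan checking `good` along the Fibonacci sequence mod 101000. -/
def fcheck : ℕ → ℕ × ℕ → Bool
  | 0, _ => true
  | m + 1, p => good p.1 && fcheck m (fstep p)

lemma fcheck_spec : ∀ m n, fcheck m (fm n) = true →
    ∀ i, i < m → good (fm (n + i)).1 = true := by
  intro m
  induction m with
  | zero => intro n _ i hi; omega
  | succ m ih =>
    intro n hc i hi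
    rw [fcheck, Bool.and_eq_true] at hc
    rcases Nat.eq_zero_or_pos i with h0 | h0
    · subst h0; simpa using hc.1
    · have hs : fstep (fm n) = fm (n + 1) := rfl
      rw [hs] at hc
      have := ih (n + 1) hc.2 (i - 1) (by omega)
      have he : n + 1 + (i - 1) = n + i := by omega
      rwa [he] at this

lemma fcheck_1500 : fcheck 1500 (fm 0) = true := by decide

lemma fm_1500 : fm 1500 = (0, 1) := by decide

-- periodicity of fib mod 101000 with period 1500
lemma fib_period_aux : ∀ n, Nat.fib (n + 1500) % 101000 = Nat.fib n % 101000 ∧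
    Nat.fib (n + 1501) % 101000 = Nat.fib (n + 1) % 101000 := by
  have h00 := fm_eq 1500
  rw [fm_1500] at h00
  have h0 : Nat.fib 1500 % 101000 = 0 := by
    have := congrArg Prod.fst h00; simpa using this.symm
  have h1 : Nat.fib 1501 % 101000 = 1 := by
    have := congrArg Prod.snd h00; simpa using this.symm
  intro n
  induction n with
  | zero => simpa using ⟨h0, h1⟩
  | succ n ih =>
    constructor
    · have e : n + 1 + 1500 = n + 1501 := by omega
      rw [e]; exact ih.2
    · have e1 : n + 1 + 1501 = (n + 1500) + 2 := by omega
      have e2 : n + 1 + 1 = n + 2 := by omega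
      rw [e1, e2, Nat.fib_add_two (n := n + 1500), Nat.fib_add_two (n := n)]
      have e3 : n + 1500 + 1 = n + 1501 := rfl
      rw [e3]
      have ha := ih.1
      have hb := ih.2
      omega

lemma fib_mod_period : ∀ q r, Nat.fib (r + 1500 * q) % 101000 = Nat.fib r % 101000 := by
  intro q
  induction q with
  | zero => intro r; rfl
  | succ q ih =>
    intro r
    have e : r + 1500 * (q + 1) = (r + 1500 * q) + 1500 := by ring
    rw [e, (fib_period_aux _).1, ih]

theorem fib_repdigit_eq_55 (n d k : ℕ) (hd1 : 1 ≤ d) (hd9 : d ≤ 9) (hk : 2 ≤ k)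
    (h : Nat.fib n = d * ((10 ^ k - 1) / 9)) : Nat.fib n = 55 := by
  rw [rep_eq] at h
  rcases Nat.lt_or_ge k 3 with hk2 | hk3
  · -- k = 2 : fib n = 11 d, small case
    have hk2' : k = 2 := by omega
    subst hk2'
    have hrep : rep 2 = 11 := rfl
    rw [hrep] at h
    have h99 : Nat.fib n ≤ 99 := by omega
    have hn12 : n < 12 := by
      by_contra hge
      have := Nat.fib_mono (show 12 ≤ n by omega)
      have h12 : Nat.fib 12 = 144 := by decide
      omega
    have key : ∀ m < 12, ∀ e < 10, Nat.fib m = (e + 1) * 11 → Nat.fib m = 55 := by decide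
    apply key n hn12 (d - 1) (by omega)
    have e : d - 1 + 1 = d := by omega
    rw [e]
    omega
  · -- k ≥ 3 : contradiction
    exfalso
    -- fib n % 1000 = 111 * d
    have h1000 : Nat.fib n % 1000 = 111 * d := by
      obtain ⟨m, rfl⟩ : ∃ m, k = m + 3 := ⟨k - 3, by omega⟩
      rw [h, rep_add3, Nat.mul_mod]
      have e : (1000 * rep m + 111) % 1000 = 111 := by omega
      rw [e]
      have ed : d % 1000 = d := by omega
      rw [ed]
      omega
    -- fib n % 101 = (d * rep (k % 4)) % 101
    have h101 : Nat.fib n % 101 = (d * rep (k % 4)) % 101 := by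
      rw [h, Nat.mul_mod]
      have e : rep k % 101 = rep (k % 4) % 101 := by
        conv_lhs => rw [show k = k % 4 + 4 * (k / 4) by omega]
        exact rep_mod101 (k / 4) (k % 4)
      rw [e, ← Nat.mul_mod]
    -- use the periodic check
    set r := n % 1500 with hr
    have hrn : Nat.fib n % 101000 = Nat.fib r % 101000 := by
      conv_lhs => rw [show n = r + 1500 * (n / 1500) by omega]
      exact fib_mod_period (n / 1500) r
    have hgood : good (fm r).1 = true := by
      have := fcheck_spec 1500 0 fcheck_1500 r (by omega)
      simpa using this
    rw [fm_eq] at hgood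
    have hfst : ((Nat.fib r % 101000, Nat.fib (r + 1) % 101000) : ℕ × ℕ).1
        = Nat.fib r % 101000 := rfl
    rw [hfst] at hgood
    apply good_spec _ hgood d (by omega) (k % 4) (by omega)
    refine ⟨hd1, ?_, ?_⟩
    · rw [← hrn] at *
      rw [Nat.mod_mod_of_dvd _ (by norm_num : (1000:ℕ) ∣ 101000)]
      exact h1000
    · rw [← hrn]
      rw [Nat.mod_mod_of_dvd _ (by norm_num : (101:ℕ) ∣ 101000)]
      exact h101
end

section
/- Every Fibonacci number F_n with n ≥ 1 has at least one base-10 digit different from 4; equivalently, no Fibonacci number F_n with n ≥ 1 is a repdigit consisting only of the digit 4, i.e., F_n ≠ 4·(10^k−1)/9 for all k ≥ 1. -/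
lemma fib_mod8_period (n : ℕ) : Nat.fib (n + 12) % 8 = Nat.fib n % 8 := by
  have h := Nat.fib_add 11 n
  have : Nat.fib (n + 12) = 89 * Nat.fib n + 144 * Nat.fib (n + 1) := by
    have e : n + 12 = 11 + n + 1 := by ring
    rw [e, h]; norm_num [Nat.fib]
  omega

lemma fib_mod8 (n : ℕ) : Nat.fib n % 8 ≠ 4 := by
  induction n using Nat.strong_induction_on with
  | _ n ih =>
    rcases lt_or_ge n 12 with h | h
    · interval_cases n <;> decide
    · obtain ⟨m, rfl⟩ : ∃ m, n = m + 12 := ⟨n - 12, by omega⟩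
      rw [fib_mod8_period]
      exact ih m (by omega)

lemma repunit_succ (j : ℕ) : (10 ^ (j + 1) - 1) / 9 = 10 * ((10 ^ j - 1) / 9) + 1 := by
  have h9 : (9 : ℕ) ∣ 10 ^ j - 1 := by
    have := Nat.sub_dvd_pow_sub_pow 10 1 j
    simpa using this
  obtain ⟨u, hu⟩ := h9
  have h1 : (1:ℕ) ≤ 10 ^ j := Nat.one_le_pow _ _ (by norm_num)
  have e : 10 ^ (j + 1) - 1 = 9 * (10 * u + 1) := by
    rw [pow_succ]; omega
  rw [e, hu]
  omega

theorem fib_not_repdigit_four (n k : ℕ) (hk : 1 ≤ k) :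
    Nat.fib n ≠ 4 * ((10 ^ k - 1) / 9) := by
  obtain ⟨j, rfl⟩ : ∃ j, k = j + 1 := ⟨k - 1, by omega⟩
  intro h
  have := fib_mod8 n
  rw [h, repunit_succ] at this
  omega
end
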